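/- Let Φ = {φ_i}_{i∈Λ} be a finite similarity IFS on ℝ^d with attractor K. Then K is not contained in any affine hyperplane if and only if there exists a section Π ⊂ Λ* such that the IFS {φ_i}_{i∈Π} is diffuse (i.e., there exists c > 0 such that every affine hyperplane ℒ admits some i ∈ Π with φ_i(K) ∩ ℒ^(c) = ∅). Moreover, either condition implies that K is hyperplane diffuse. -/

import Mathlib

/-!
If `K` lies in no affine hyperplane, a compactness argument over the (compact) space of unit
normals and bounded offsets gives `ε > 0` such that every hyperplane misses some point of `K`
by at least `ε`. The level-`n` cylinders `φ_w(K)` have diameter at most `(max r)ⁿ diam K`, so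
for large `n` the cylinder containing such a point stays `ε/2` away from the hyperplane: the
words of length `n` form a diffuse section. Conversely, a cylinder of a diffuse section lies in
`K`, so `K` cannot lie in a hyperplane. For hyperplane diffuseness at scale `ξ` around `x ∈ K`,
pick a cylinder `φ_w(K) ∋ x` whose ratio is comparable to `ξ`; since `φ_w` is a similarity, the
`ε`-property of `K` pulls back along `φ_w` to a point of `φ_w(K)` at distance `≳ εξ` from the
hyperplane.
-/

open Metric

noncomputable section

def compWord {Λ E : Type*} (φ : Λ → E → E) (w : List Λ) : E → E :=
  w.foldr (fun i g => φ i ∘ g) id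

/-- A section: a finite set of finite words whose cylinder sets partition `Λ^ℕ`, i.e. every
infinite word has exactly one prefix in the section. -/
def IsSection {Λ : Type*} (Pi : Finset (List Λ)) : Prop :=
  ∀ x : ℕ → Λ, ∃! w : List Λ, w ∈ Pi ∧ ∀ i : Fin w.length, w.get i = x i

def HyperplaneDiffuseWith {d : ℕ} (F : Set (EuclideanSpace ℝ (Fin d))) (β : ℝ) : Prop :=
  ∃ ξ₀ : ℝ, 0 < ξ₀ ∧ ∀ ξ : ℝ, 0 < ξ → ξ < ξ₀ → ∀ x ∈ F,
    ∀ v : EuclideanSpace ℝ (Fin d), v ≠ 0 → ∀ c' : ℝ,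
      ((F ∩ ball x ξ) \ thickening (β * ξ) {y | inner ℝ v y = (c' : ℝ)}).Nonempty

open Set Filter Topology

theorem prod_map_le_pow_length {Λ : Type*} {r : Λ → ℝ} {q : ℝ} (h0 : ∀ i, 0 ≤ r i)
    (hq : ∀ i, r i ≤ q) (w : List Λ) : (w.map r).prod ≤ q ^ w.length := by
  induction w with
  | nil => simp
  | cons i w ih =>
    rw [List.map_cons, List.prod_cons, List.length_cons, pow_succ']
    exact mul_le_mul (hq i) ih (List.prod_nonneg fun _ ht => by
      obtain ⟨j, -, rfl⟩ := List.mem_map.1 ht; exact h0 j) ((h0 i).trans (hq i))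

section Words

variable {Λ X : Type*} (φ : Λ → X → X)

theorem compWord_cons (i : Λ) (w : List Λ) : compWord φ (i :: w) = φ i ∘ compWord φ w := rfl

theorem mapsTo_compWord {K : Set X} (h : ∀ i, MapsTo (φ i) K K) (w : List Λ) :
    MapsTo (compWord φ w) K K := by
  induction w with
  | nil => exact mapsTo_id K
  | cons i w ih => exact (h i).comp ih

theorem exists_ofFn_mem_image_compWord {K : Set X} (hK : K ⊆ ⋃ i, φ i '' K) (n : ℕ) {x : X}
    (hx : x ∈ K) : ∃ f : Fin n → Λ, x ∈ compWord φ (List.ofFn f) '' K := by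
  induction n generalizing x with
  | zero => exact ⟨Fin.elim0, x, hx, rfl⟩
  | succ n ih =>
    obtain ⟨i, y, hy, rfl⟩ := mem_iUnion.1 (hK hx)
    obtain ⟨f, z, hz, rfl⟩ := ih hy
    exact ⟨Fin.cons i f, z, hz, by simp [List.ofFn_succ, compWord_cons]⟩

/-- Cut a coding of `x` at its first prefix whose ratio drops to `s` or below. -/
theorem exists_mem_image_compWord_prod_mem_Ioc {K : Set X} (hK : K ⊆ ⋃ i, φ i '' K)
    {r : Λ → ℝ} {rmin q : ℝ} (hr : ∀ i, 0 < r i) (hmin : ∀ i, rmin ≤ r i) (hmax : ∀ i, r i ≤ q)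
    (hq : q < 1) {s : ℝ} (hs0 : 0 < s) (hs1 : s < 1) {x : X} (hx : x ∈ K) :
    ∃ w : List Λ, x ∈ compWord φ w '' K ∧ (w.map r).prod ∈ Ioc (rmin * s) s := by
  obtain ⟨n, hn⟩ := exists_pow_lt_of_lt_one hs0 hq
  induction n generalizing s x with
  | zero => exact absurd (hn.trans hs1) (by simp)
  | succ n ih =>
    obtain ⟨i, y, hy, rfl⟩ := mem_iUnion.1 (hK hx)
    have hri := hr i
    by_cases his : r i ≤ s
    · refine ⟨[i], ⟨y, hy, rfl⟩, ?_, by simpa using his⟩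
      simp only [List.map_cons, List.map_nil, List.prod_cons, List.prod_nil, mul_one]
      linarith [mul_le_mul_of_nonneg_right (hmin i) hs0.le, mul_lt_of_lt_one_right hri hs1]
    · replace his := not_le.1 his
      have hqn : q ^ n * r i < s := by
        calc q ^ n * r i ≤ q ^ n * q :=
              mul_le_mul_of_nonneg_left (hmax i) (pow_nonneg (hri.le.trans (hmax i)) n)
        _ = q ^ (n + 1) := (pow_succ q n).symm
        _ < s := hn
      obtain ⟨w, ⟨z, hz, hzy⟩, hlo, hhi⟩ := ih (div_pos hs0 hri) ((div_lt_one hri).2 his) hy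
        ((lt_div_iff₀ hri).2 hqn)
      refine ⟨i :: w, ⟨z, hz, by rw [compWord_cons, Function.comp_apply, hzy]⟩, ?_, ?_⟩
      · rw [List.map_cons, List.prod_cons]
        calc rmin * s = r i * (rmin * (s / r i)) := by field_simp
        _ < r i * (w.map r).prod := mul_lt_mul_of_pos_left hlo hri
      · rw [List.map_cons, List.prod_cons]
        calc r i * (w.map r).prod ≤ r i * (s / r i) := mul_le_mul_of_nonneg_left hhi hri.le
        _ = s := by field_simp

theorem isSection_image_ofFn [Fintype Λ] [DecidableEq Λ] (n : ℕ) :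
    IsSection ((Finset.univ : Finset (Fin n → Λ)).image List.ofFn) := by
  intro x
  refine ⟨List.ofFn fun i : Fin n => x i, ⟨Finset.mem_image_of_mem _ (Finset.mem_univ _),
    fun i => by simp⟩, ?_⟩
  rintro w ⟨hw, hwx⟩
  obtain ⟨f, -, rfl⟩ := Finset.mem_image.1 hw
  refine List.ofFn_inj.2 (funext fun i => ?_)
  simpa using hwx ⟨i, by simp⟩

variable [PseudoMetricSpace X] {r : Λ → ℝ}

theorem dist_compWord (hsim : ∀ i x y, dist (φ i x) (φ i y) = r i * dist x y) (w : List Λ)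
    (x y : X) : dist (compWord φ w x) (compWord φ w y) = (w.map r).prod * dist x y := by
  induction w with
  | nil => simp [compWord]
  | cons i w ih => simp only [compWord_cons, Function.comp_apply, List.map_cons,
      List.prod_cons, hsim, ih, mul_assoc]

theorem dist_compWord_le_pow_mul_diam (hsim : ∀ i x y, dist (φ i x) (φ i y) = r i * dist x y)
    (hr : ∀ i, 0 ≤ r i) {q : ℝ} (hq0 : 0 ≤ q) (hmax : ∀ i, r i ≤ q) {K : Set X}
    (hKb : Bornology.IsBounded K) (w : List Λ) {x y : X} (hx : x ∈ K) (hy : y ∈ K) :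
    dist (compWord φ w x) (compWord φ w y) ≤ q ^ w.length * diam K := by
  rw [dist_compWord φ hsim]
  exact mul_le_mul (prod_map_le_pow_length hr hmax w) (dist_le_diam_of_mem hKb hx hy)
    dist_nonneg (pow_nonneg hq0 _)

end Words

section Hyperplane

variable {E : Type*} [NormedAddCommGroup E] [InnerProductSpace ℝ E]

theorem abs_inner_sub_inner_le (v x y : E) : |inner ℝ v x - inner ℝ v y| ≤ ‖v‖ * dist x y := by
  rw [← inner_sub_right, dist_eq_norm]
  exact abs_real_inner_le_norm v (x - y)

theorem notMem_thickening_hyperplane {v : E} (hv : v ≠ 0) {a c : ℝ} {y : E}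
    (h : c * ‖v‖ ≤ |inner ℝ v y - a|) : y ∉ thickening c {z | inner ℝ v z = a} := by
  intro hy
  obtain ⟨z, hz, hyz⟩ := mem_thickening_iff.1 hy
  have : |inner ℝ v y - a| < c * ‖v‖ := by
    calc |inner ℝ v y - a| = |inner ℝ v y - inner ℝ v z| := by rw [show inner ℝ v z = a from hz]
    _ ≤ ‖v‖ * dist y z := abs_inner_sub_inner_le v y z
    _ < ‖v‖ * c := mul_lt_mul_of_pos_left hyz (norm_pos_iff.2 hv)
    _ = c * ‖v‖ := mul_comm _ _
  exact this.not_ge h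

theorem le_abs_inner_sub_of_dist_le {v x y : E} {a ε δ : ℝ} (hx : ε * ‖v‖ ≤ |inner ℝ v x - a|)
    (hxy : dist y x ≤ δ) : (ε - δ) * ‖v‖ ≤ |inner ℝ v y - a| := by
  have h1 := abs_sub_le (inner ℝ v x) (inner ℝ v y) a
  have h2 : |inner ℝ v x - inner ℝ v y| ≤ ‖v‖ * δ := by
    rw [abs_sub_comm]
    exact (abs_inner_sub_inner_le v y x).trans (mul_le_mul_of_nonneg_left hxy (norm_nonneg v))
  linarith

def ContainedInHyperplane (K : Set E) : Prop :=
  ∃ v : E, v ≠ 0 ∧ ∃ a : ℝ, K ⊆ {x | inner ℝ v x = a}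

theorem exists_pos_le_abs_inner_sub_of_norm_eq_one [FiniteDimensional ℝ E] {K : Set E}
    (hKne : K.Nonempty) (hK : ¬ ContainedInHyperplane K) :
    ∃ ε > 0, ∀ v : E, ‖v‖ = 1 → ∀ a : ℝ, ∃ x ∈ K, ε ≤ |inner ℝ v x - a| := by
  by_contra! hflat
  obtain ⟨x₀, hx₀⟩ := hKne
  choose v hv a ha using fun n : ℕ => hflat (1 / (n + 1)) Nat.one_div_pos_of_nat
  -- the offsets stay bounded because every approximating hyperplane passes near `x₀`
  have ha_mem : ∀ n, a n ∈ Icc (-(‖x₀‖ + 1)) (‖x₀‖ + 1) := fun n => by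
    have h1 := abs_lt.1 (ha n x₀ hx₀)
    have h2 := abs_le.1 (by simpa [hv n] using abs_real_inner_le_norm (v n) x₀)
    have h3 : 1 / ((n : ℝ) + 1) ≤ 1 := div_le_one_of_le₀ (by simp) (by positivity)
    constructor <;> linarith
  obtain ⟨⟨u, b⟩, ⟨hu, -⟩, ψ, hψ, hlim⟩ :=
    ((isCompact_sphere (0 : E) 1).prod isCompact_Icc).tendsto_subseq (x := fun n => (v n, a n))
      fun n => ⟨mem_sphere_zero_iff_norm.2 (hv n), ha_mem n⟩
  refine hK ⟨u, ne_zero_of_mem_unit_sphere ⟨u, hu⟩, b, fun x hx => ?_⟩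
  have hconv : Tendsto (fun k => |inner ℝ (v (ψ k)) x - a (ψ k)|) atTop (𝓝 |inner ℝ u x - b|) :=
    (((continuous_fst.inner continuous_const).sub continuous_snd).abs.tendsto (u, b)).comp hlim
  have hzero : Tendsto (fun k => 1 / ((ψ k : ℝ) + 1)) atTop (𝓝 0) :=
    tendsto_one_div_add_atTop_nhds_zero_nat.comp hψ.tendsto_atTop
  exact sub_eq_zero.1 (abs_nonpos_iff.1
    (le_of_tendsto_of_tendsto' hconv hzero fun k => (ha (ψ k) x hx).le))

theorem exists_pos_mul_norm_le_abs_inner_sub [FiniteDimensional ℝ E] {K : Set E}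
    (hKne : K.Nonempty) (hK : ¬ ContainedInHyperplane K) :
    ∃ ε > 0, ∀ v : E, ∀ a : ℝ, ∃ x ∈ K, ε * ‖v‖ ≤ |inner ℝ v x - a| := by
  obtain ⟨ε, hε, hunit⟩ := exists_pos_le_abs_inner_sub_of_norm_eq_one hKne hK
  refine ⟨ε, hε, fun v a => ?_⟩
  rcases eq_or_ne v 0 with rfl | hv
  · obtain ⟨x, hx⟩ := hKne
    exact ⟨x, hx, by simp⟩
  have hvn : 0 < ‖v‖ := norm_pos_iff.2 hv
  obtain ⟨x, hx, hxa⟩ := hunit (‖v‖⁻¹ • v) (norm_smul_inv_norm hv) (‖v‖⁻¹ * a)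
  refine ⟨x, hx, ?_⟩
  rwa [real_inner_smul_left, ← mul_sub, abs_mul, abs_of_pos (inv_pos.2 hvn), inv_mul_eq_div,
    le_div_iff₀ hvn] at hxa

end Hyperplane

section Similarity

theorem exists_linearIsometryEquiv_of_dist_eq_mul {F : Type*} [NormedAddCommGroup F]
    [NormedSpace ℝ F] [StrictConvexSpace ℝ F] [FiniteDimensional ℝ F] {f : F → F} {ρ : ℝ}
    (hρ : 0 < ρ) (hf : ∀ x y, dist (f x) (f y) = ρ * dist x y) :
    ∃ (A : F ≃ₗᵢ[ℝ] F) (b : F), ∀ x, f x = ρ • A x + b := by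
  have hiso : Isometry fun x => ρ⁻¹ • f x := Isometry.of_dist_eq fun x y => by
    rw [dist_smul₀, hf, Real.norm_eq_abs, abs_of_pos (inv_pos.2 hρ), inv_mul_cancel_left₀ hρ.ne']
  set g := hiso.affineIsometryOfStrictConvexSpace
  refine ⟨g.linearIsometry.toLinearIsometryEquiv rfl, f 0, fun x => ?_⟩
  have hg : ρ⁻¹ • f x = g.linearIsometry x + ρ⁻¹ • f 0 := by
    simpa [g] using g.map_vadd 0 x
  rw [LinearIsometry.coe_toLinearIsometryEquiv, ← smul_inv_smul₀ hρ.ne' (f x), hg, smul_add,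
    smul_inv_smul₀ hρ.ne']

variable {E : Type*} [NormedAddCommGroup E] [InnerProductSpace ℝ E] [FiniteDimensional ℝ E]

theorem exists_inner_sub_eq_mul_inner_sub_of_dist_eq_mul {f : E → E} {ρ : ℝ} (hρ : 0 < ρ)
    (hf : ∀ x y, dist (f x) (f y) = ρ * dist x y) (v : E) (a : ℝ) :
    ∃ (v' : E) (a' : ℝ), ‖v'‖ = ‖v‖ ∧ ∀ y, inner ℝ v (f y) - a = ρ * (inner ℝ v' y - a') := by
  obtain ⟨A, b, hA⟩ := exists_linearIsometryEquiv_of_dist_eq_mul hρ hf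
  refine ⟨A.symm v, (a - inner ℝ v b) / ρ, A.symm.norm_map v, fun y => ?_⟩
  rw [hA, inner_add_right, real_inner_smul_right, A.symm.inner_map_eq_flip, A.symm_symm]
  field_simp
  ring

end Similarity

section IFS

variable {Λ E : Type*} [NormedAddCommGroup E] [InnerProductSpace ℝ E] {φ : Λ → E → E}
  {r : Λ → ℝ} {K : Set E}

def IsDiffuseOn (φ : Λ → E → E) (K : Set E) (Pi : Finset (List Λ)) (c : ℝ) : Prop :=
  ∀ v : E, v ≠ 0 → ∀ a : ℝ, ∃ w ∈ Pi, compWord φ w '' K ∩ thickening c {y | inner ℝ v y = a} = ∅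

theorem not_containedInHyperplane_of_isDiffuseOn (hKne : K.Nonempty)
    (hsub : ∀ i, MapsTo (φ i) K K) {Pi : Finset (List Λ)} {c : ℝ} (hc : 0 < c)
    (hdiff : IsDiffuseOn φ K Pi c) : ¬ ContainedInHyperplane K := by
  rintro ⟨v, hv, a, hKa⟩
  obtain ⟨w, -, hempty⟩ := hdiff v hv a
  obtain ⟨x, hx⟩ := hKne
  refine (eq_empty_iff_forall_notMem.1 hempty) (compWord φ w x) ⟨mem_image_of_mem _ hx, ?_⟩
  exact self_subset_thickening hc _ (hKa (mapsTo_compWord φ hsub w hx))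

theorem exists_isSection_isDiffuseOn [Fintype Λ] [Nonempty Λ] [FiniteDimensional ℝ E]
    (hsim : ∀ i x y, dist (φ i x) (φ i y) = r i * dist x y) (hr : ∀ i, 0 ≤ r i) {q : ℝ}
    (hmax : ∀ i, r i ≤ q) (hq : q < 1) (hKb : Bornology.IsBounded K) (hKne : K.Nonempty)
    (hcover : K ⊆ ⋃ i, φ i '' K) (hK : ¬ ContainedInHyperplane K) :
    ∃ Pi : Finset (List Λ), IsSection Pi ∧ ∃ c : ℝ, 0 < c ∧ IsDiffuseOn φ K Pi c := by
  classical
  obtain ⟨ε, hε, hfar⟩ := exists_pos_mul_norm_le_abs_inner_sub hKne hK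
  have hq0 : 0 ≤ q := (hr (Classical.arbitrary Λ)).trans (hmax _)
  have hsmall : ∀ᶠ n : ℕ in atTop, q ^ n * diam K < ε / 2 :=
    ((tendsto_pow_atTop_nhds_zero_of_lt_one hq0 hq).mul_const (diam K)).eventually
      (gt_mem_nhds (by simpa using half_pos hε))
  obtain ⟨n, hn⟩ := hsmall.exists
  refine ⟨_, isSection_image_ofFn n, ε / 2, half_pos hε, fun v hv a => ?_⟩
  obtain ⟨x, hx, hxa⟩ := hfar v a
  obtain ⟨f, x', hx', rfl⟩ := exists_ofFn_mem_image_compWord φ hcover n hx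
  refine ⟨List.ofFn f, Finset.mem_image_of_mem _ (Finset.mem_univ f),
    eq_empty_of_forall_notMem ?_⟩
  rintro _ ⟨⟨y, hy, rfl⟩, hthick⟩
  have hclose := dist_compWord_le_pow_mul_diam φ hsim hr hq0 hmax hKb (List.ofFn f) hy hx'
  rw [List.length_ofFn] at hclose
  refine notMem_thickening_hyperplane hv ?_ hthick
  simpa only [sub_half] using le_abs_inner_sub_of_dist_le hxa (hclose.trans hn.le)

end IFS

theorem hyperplaneDiffuseWith_of_not_containedInHyperplane {Λ : Type*} {d : ℕ}
    {φ : Λ → EuclideanSpace ℝ (Fin d) → EuclideanSpace ℝ (Fin d)} {r : Λ → ℝ}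
    {K : Set (EuclideanSpace ℝ (Fin d))}
    (hsim : ∀ i x y, dist (φ i x) (φ i y) = r i * dist x y) (hr : ∀ i, 0 < r i) {rmin q : ℝ}
    (hrmin : 0 < rmin) (hmin : ∀ i, rmin ≤ r i) (hmax : ∀ i, r i ≤ q) (hq : q < 1)
    (hKb : Bornology.IsBounded K) (hKne : K.Nonempty) (hcover : K ⊆ ⋃ i, φ i '' K)
    (hsub : ∀ i, MapsTo (φ i) K K) (hK : ¬ ContainedInHyperplane K) :
    ∃ β : ℝ, 0 < β ∧ HyperplaneDiffuseWith K β := by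
  obtain ⟨ε, hε, hfar⟩ := exists_pos_mul_norm_le_abs_inner_sub hKne hK
  have hD : 0 ≤ diam K := diam_nonneg
  refine ⟨ε * rmin / (diam K + 1), by positivity, 1, one_pos,
    fun ξ hξ hξ1 x hx v hv c' => ?_⟩
  set s := ξ / (diam K + 1)
  have hs0 : 0 < s := by positivity
  have hs1 : s < 1 := (div_lt_one (by positivity)).2 (by linarith)
  obtain ⟨w, ⟨x₁, hx₁, rfl⟩, hlo, hhi⟩ :=
    exists_mem_image_compWord_prod_mem_Ioc φ hcover hr hmin hmax hq hs0 hs1 hx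
  set ρ := (w.map r).prod
  have hρ : 0 < ρ := (mul_pos hrmin hs0).trans hlo
  obtain ⟨v', a', hv', hpull⟩ :=
    exists_inner_sub_eq_mul_inner_sub_of_dist_eq_mul hρ (dist_compWord φ hsim w) v c'
  obtain ⟨y, hy, hya⟩ := hfar v' a'
  refine ⟨compWord φ w y, ⟨mapsTo_compWord φ hsub w hy, ?_⟩, notMem_thickening_hyperplane hv ?_⟩
  · rw [mem_ball, dist_compWord φ hsim]
    calc ρ * dist y x₁ ≤ s * diam K :=
          mul_le_mul hhi (dist_le_diam_of_mem hKb hy hx₁) dist_nonneg hs0.le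
    _ < ξ := by
          rw [div_mul_eq_mul_div, div_lt_iff₀ (by positivity)]
          nlinarith
  · rw [hpull, abs_mul, abs_of_pos hρ, ← hv']
    calc ε * rmin / (diam K + 1) * ξ * ‖v'‖ = rmin * s * (ε * ‖v'‖) := by
          simp only [s]; ring
    _ ≤ ρ * |inner ℝ v' y - a'| := mul_le_mul hlo.le hya (by positivity) hρ.le

/-- For a finite similarity IFS with attractor `K`: `K` is not contained in any affine
hyperplane iff there is a diffuse section; moreover either condition implies that `K` is
hyperplane diffuse. -/
theorem attractor_not_in_hyperplane_iff_diffuse_section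
    {d : ℕ} {Λ : Type*} [Fintype Λ] [Nonempty Λ]
    (φ : Λ → EuclideanSpace ℝ (Fin d) → EuclideanSpace ℝ (Fin d))
    (r : Λ → ℝ) (hr : ∀ i, r i ∈ Set.Ioo (0:ℝ) 1)
    (hsim : ∀ i x y, dist (φ i x) (φ i y) = r i * dist x y)
    (K : Set (EuclideanSpace ℝ (Fin d))) (hKc : IsCompact K) (hKne : K.Nonempty)
    (hK : K = ⋃ i, φ i '' K) :
    ((¬ ∃ v : EuclideanSpace ℝ (Fin d), v ≠ 0 ∧ ∃ a : ℝ,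
        K ⊆ {x | inner ℝ v x = (a : ℝ)}) ↔
      (∃ Pi : Finset (List Λ), IsSection Pi ∧ ∃ c : ℝ, 0 < c ∧
        ∀ v : EuclideanSpace ℝ (Fin d), v ≠ 0 → ∀ a : ℝ,
          ∃ w ∈ Pi, (compWord φ w '' K) ∩ thickening c {y | inner ℝ v y = (a : ℝ)} = ∅)) ∧
    ((¬ ∃ v : EuclideanSpace ℝ (Fin d), v ≠ 0 ∧ ∃ a : ℝ,
        K ⊆ {x | inner ℝ v x = (a : ℝ)}) →
      ∃ β : ℝ, 0 < β ∧ HyperplaneDiffuseWith K β) := by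
  have hcover : K ⊆ ⋃ i, φ i '' K := hK.subset
  have hsub : ∀ i, MapsTo (φ i) K K := fun i =>
    mapsTo_iff_image_subset.2 ((subset_iUnion (fun j => φ j '' K) i).trans hK.symm.subset)
  have hr0 : ∀ i, 0 < r i := fun i => (hr i).1
  obtain ⟨imin, hmin⟩ := Finite.exists_min r
  obtain ⟨imax, hmax⟩ := Finite.exists_max r
  refine ⟨⟨fun hflat => ?_, fun ⟨_, _, _, hc, hdiff⟩ => ?_⟩, fun hflat => ?_⟩
  · exact exists_isSection_isDiffuseOn hsim (fun i => (hr0 i).le) hmax (hr imax).2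
      hKc.isBounded hKne hcover hflat
  · exact not_containedInHyperplane_of_isDiffuseOn hKne hsub hc hdiff
  · exact hyperplaneDiffuseWith_of_not_containedInHyperplane hsim hr0 (hr0 imin) hmin hmax
      (hr imax).2 hKc.isBounded hKne hcover hsub hflat
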